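/- Let L be a selfadjoint operator in L²(X, m), bounded below, with E0 the infimum of the spectrum of L, and assume that the semigroup (e^{-tL})_{t≥0} is positivity improving. Then lim_{t→∞} (log⟨f, e^{-tL} g⟩)/t = −E0 for all positive f and g in L²(X, m). -/

import Mathlib

/-!
The upper bound `⟪f, e^{-tL} g⟫ ≤ ‖f‖ ‖g‖ e^{-t E0}` is just `‖e^{-tL}‖ = e^{-t E0}`.
For the lower bound, `W = e^{-L} f ⊓ e^{-L} g` is strictly positive and positivity gives
`⟪W, e^{-(t-2)L} W⟫ ≤ ⟪f, e^{-tL} g⟫`. The order ideal `{u : |u| ≤ C W}` is dense, so for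
every `ε > 0` it contains some `u` whose spectral measure charges `(-∞, E0 + ε)`: otherwise
`‖e^{-L}‖ ≤ e^{-(E0 + ε)}`. For such `u`,
`C² ⟪W, e^{-tL} W⟫ ≥ ⟪|u|, e^{-tL} |u|⟫ ≥ ⟪u, e^{-tL} u⟫ ≥ c e^{-t(E0 + ε)}` with `c > 0`.
-/

open MeasureTheory Filter Topology
open scoped InnerProductSpace ENNReal

noncomputable section

/-- The infimum of the topological support of a Borel measure on `ℝ`, following the paper's
definition: `supp μ = {E : ∀ δ > 0, μ(E - δ, E + δ) > 0}`. -/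
def suppInf (μ : Measure ℝ) : ℝ :=
  sInf {E : ℝ | ∀ δ > 0, 0 < μ (Set.Ioo (E - δ) (E + δ))}

/-- `T` is the heat semigroup `(e^{-tL})_{t ≥ 0}` of a selfadjoint operator `L` in `H` that is
bounded below, where `ρ f` is the spectral measure of `f` with respect to `L` (the finite Borel
measure supported in `[E0, ∞)` with `⟪f, e^{-tL} f⟫ = ∫ e^{-ts} dρ_f(s)` for all `t ≥ 0`),
and `E0` is the infimum of the spectrum of `L` (equivalently, `‖e^{-tL}‖ = e^{-t·E0}`). -/
structure IsHeatSemigroupOf {H : Type*} [NormedAddCommGroup H] [InnerProductSpace ℝ H]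
    [CompleteSpace H] (T : ℝ → H →L[ℝ] H) (ρ : H → Measure ℝ) (E0 : ℝ) : Prop where
  symm : ∀ t : ℝ, 0 ≤ t → ∀ f g : H, ⟪T t f, g⟫_ℝ = ⟪f, T t g⟫_ℝ
  map_zero : T 0 = 1
  semigroup : ∀ s t : ℝ, 0 ≤ s → 0 ≤ t → T (s + t) = T s ∘L T t
  finite : ∀ f : H, ρ f Set.univ ≠ ⊤
  support_bddBelow : ∀ f : H, ρ f (Set.Iio E0) = 0
  inner_eq : ∀ (f : H) (t : ℝ), 0 ≤ t → ⟪f, T t f⟫_ℝ = ∫ s, Real.exp (-(t * s)) ∂(ρ f)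
  norm_eq : ∀ t : ℝ, 0 ≤ t → ‖T t‖ = Real.exp (-(t * E0))

lemma ae_le_of_measure_Iio_eq_zero {α : Type*} [MeasurableSpace α] [LinearOrder α]
    {μ : Measure α} {E : α} (h : μ (Set.Iio E) = 0) :
    ∀ᵐ s ∂μ, E ≤ s := by
  rw [ae_iff]
  simp_rw [not_le]
  exact h

namespace IsHeatSemigroupOf

variable {H : Type*} [NormedAddCommGroup H] [InnerProductSpace ℝ H] [CompleteSpace H]
  {T : ℝ → H →L[ℝ] H} {ρ : H → Measure ℝ} {E0 : ℝ}

lemma isFiniteMeasure (hT : IsHeatSemigroupOf T ρ E0) (u : H) : IsFiniteMeasure (ρ u) :=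
  ⟨(hT.finite u).lt_top⟩

lemma integrable_exp (hT : IsHeatSemigroupOf T ρ E0) (u : H) {t : ℝ} (ht : 0 ≤ t) :
    Integrable (fun s => Real.exp (-(t * s))) (ρ u) := by
  have := hT.isFiniteMeasure u
  refine (integrable_const (Real.exp (-(t * E0)))).mono' (by fun_prop) ?_
  filter_upwards [ae_le_of_measure_Iio_eq_zero (hT.support_bddBelow u)] with s hs
  rw [Real.norm_of_nonneg (Real.exp_nonneg _)]
  exact Real.exp_le_exp.2 (by nlinarith)

lemma measureReal_univ (hT : IsHeatSemigroupOf T ρ E0) (u : H) :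
    (ρ u).real Set.univ = ‖u‖ ^ 2 := by
  simpa [hT.map_zero, real_inner_self_eq_norm_sq] using (hT.inner_eq u 0 le_rfl).symm

lemma exp_mul_measureReal_Iio_le_inner (hT : IsHeatSemigroupOf T ρ E0) (u : H) (E1 : ℝ)
    {t : ℝ} (ht : 0 ≤ t) :
    Real.exp (-(t * E1)) * (ρ u).real (Set.Iio E1) ≤ ⟪u, T t u⟫_ℝ := by
  have := hT.isFiniteMeasure u
  rw [hT.inner_eq u t ht]
  calc Real.exp (-(t * E1)) * (ρ u).real (Set.Iio E1)
      ≤ ∫ s in Set.Iio E1, Real.exp (-(t * s)) ∂(ρ u) :=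
        setIntegral_ge_of_const_le_real measurableSet_Iio (measure_ne_top _ _)
          (fun s hs => Real.exp_le_exp.2 (by nlinarith [Set.mem_Iio.1 hs]))
          (hT.integrable_exp u ht).integrableOn
    _ ≤ ∫ s, Real.exp (-(t * s)) ∂(ρ u) :=
        setIntegral_le_integral (hT.integrable_exp u ht) (.of_forall fun _ => (Real.exp_pos _).le)

lemma inner_apply_self_le_of_measure_Iio_eq_zero (hT : IsHeatSemigroupOf T ρ E0) {u : H}
    {E1 : ℝ} (hu : ρ u (Set.Iio E1) = 0) {t : ℝ} (ht : 0 ≤ t) :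
    ⟪u, T t u⟫_ℝ ≤ Real.exp (-(t * E1)) * ‖u‖ ^ 2 := by
  have := hT.isFiniteMeasure u
  rw [hT.inner_eq u t ht, ← hT.measureReal_univ u, mul_comm, ← smul_eq_mul, ← integral_const]
  refine integral_mono_ae (hT.integrable_exp u ht) (integrable_const _) ?_
  filter_upwards [ae_le_of_measure_Iio_eq_zero hu] with s hs
  exact Real.exp_le_exp.2 (by nlinarith)

lemma inner_apply_apply (hT : IsHeatSemigroupOf T ρ E0) {r s : ℝ} (hr : 0 ≤ r) (hs : 0 ≤ s)
    (u v : H) : ⟪T r u, T s v⟫_ℝ = ⟪u, T (r + s) v⟫_ℝ := by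
  rw [hT.symm r hr, hT.semigroup r s hr hs, ContinuousLinearMap.comp_apply]

lemma norm_apply_le_of_measure_Iio_eq_zero (hT : IsHeatSemigroupOf T ρ E0) {u : H}
    {E1 : ℝ} (hu : ρ u (Set.Iio E1) = 0) {t : ℝ} (ht : 0 ≤ t) :
    ‖T t u‖ ≤ Real.exp (-(t * E1)) * ‖u‖ := by
  refine (pow_le_pow_iff_left₀ (norm_nonneg _) (by positivity) two_ne_zero).1 ?_
  calc ‖T t u‖ ^ 2 = ⟪u, T (t + t) u⟫_ℝ := by
        rw [← real_inner_self_eq_norm_sq, hT.inner_apply_apply ht ht]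
    _ ≤ Real.exp (-((t + t) * E1)) * ‖u‖ ^ 2 :=
        hT.inner_apply_self_le_of_measure_Iio_eq_zero hu (by positivity)
    _ = (Real.exp (-(t * E1)) * ‖u‖) ^ 2 := by
        rw [mul_pow, sq (Real.exp _), ← Real.exp_add]; ring_nf

lemma le_of_dense_of_measure_Iio_eq_zero (hT : IsHeatSemigroupOf T ρ E0) {D : Set H}
    (hD : Dense D) {E1 : ℝ} (h : ∀ u ∈ D, ρ u (Set.Iio E1) = 0) : E1 ≤ E0 := by
  have hbound : ∀ x, ‖T 1 x‖ ≤ Real.exp (-E1) * ‖x‖ := by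
    refine hD.induction (fun u hu => ?_) (isClosed_le (by fun_prop) (by fun_prop))
    simpa using hT.norm_apply_le_of_measure_Iio_eq_zero (h u hu) zero_le_one
  have hnorm := (T 1).opNorm_le_bound (Real.exp_nonneg _) hbound
  rw [hT.norm_eq 1 zero_le_one, one_mul, Real.exp_le_exp] at hnorm
  linarith

lemma inner_apply_le (hT : IsHeatSemigroupOf T ρ E0) {t : ℝ} (ht : 0 ≤ t) (u v : H) :
    ⟪u, T t v⟫_ℝ ≤ ‖u‖ * ‖v‖ * Real.exp (-(t * E0)) :=
  calc ⟪u, T t v⟫_ℝ ≤ ‖u‖ * (‖T t‖ * ‖v‖) :=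
        (real_inner_le_norm _ _).trans (by gcongr; exact (T t).le_opNorm v)
    _ = ‖u‖ * ‖v‖ * Real.exp (-(t * E0)) := by rw [hT.norm_eq t ht]; ring

end IsHeatSemigroupOf

lemma abs_max_min_le {a b : ℝ} (hb : 0 ≤ b) :
    |max (min a b) (-b)| ≤ |a| ∧ |max (min a b) (-b)| ≤ b := by
  constructor <;> rw [abs_le] <;> constructor <;> grind [abs_nonneg, le_abs_self, neg_abs_le]

namespace MeasureTheory.L2

variable {X : Type*} [MeasurableSpace X] {m : Measure X}

lemma inner_nonneg {u v : Lp ℝ 2 m} (hu : 0 ≤ u) (hv : 0 ≤ v) : 0 ≤ ⟪u, v⟫_ℝ := by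
  rw [inner_def]
  refine integral_nonneg_of_ae ?_
  filter_upwards [(Lp.coeFn_nonneg u).2 hu, (Lp.coeFn_nonneg v).2 hv] with x hux hvx
  simpa using mul_nonneg hvx hux

lemma norm_sq_eq_integral (u : Lp ℝ 2 m) : ‖u‖ ^ 2 = ∫ x, u x ^ 2 ∂m := by
  rw [← real_inner_self_eq_norm_sq, inner_def]
  simp [sq]

lemma integrable_sq (u : Lp ℝ 2 m) : Integrable (fun x => u x ^ 2) m := by
  simpa [sq] using integrable_inner (𝕜 := ℝ) u u

lemma tendsto_of_ae_tendsto_of_abs_le {u : ℕ → Lp ℝ 2 m} {v : Lp ℝ 2 m}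
    (hlim : ∀ᵐ x ∂m, Tendsto (fun n => u n x) atTop (𝓝 (v x)))
    (hle : ∀ n, ∀ᵐ x ∂m, |u n x| ≤ |v x|) : Tendsto u atTop (𝓝 v) := by
  have hsq : Tendsto (fun n => ∫ x, (u n x - v x) ^ 2 ∂m) atTop (𝓝 0) := by
    have hdom : ∀ n, ∀ᵐ x ∂m, ‖(u n x - v x) ^ 2‖ ≤ 4 * v x ^ 2 := fun n => by
      filter_upwards [hle n] with x hx
      rw [Real.norm_of_nonneg (sq_nonneg _), ← sq_abs, ← sq_abs (v x)]
      nlinarith [abs_sub (u n x) (v x), abs_nonneg (u n x - v x)]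
    simpa using tendsto_integral_of_dominated_convergence (f := fun _ => 0) _
      (fun n => ((Lp.aestronglyMeasurable (u n)).sub (Lp.aestronglyMeasurable v)).pow 2)
      ((integrable_sq v).const_mul 4) hdom
      (hlim.mono fun x hx => by simpa using (hx.sub_const (v x)).pow 2)
  have hnorm : ∀ n, ‖u n - v‖ ^ 2 = ∫ x, (u n x - v x) ^ 2 ∂m := fun n => by
    rw [norm_sq_eq_integral]
    refine integral_congr_ae ?_
    filter_upwards [Lp.coeFn_sub (u n) v] with x hx
    rw [hx, Pi.sub_apply]
  rw [tendsto_iff_norm_sub_tendsto_zero]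
  simpa [← hnorm, Real.sqrt_sq (norm_nonneg _)] using hsq.sqrt

lemma dense_setOf_abs_le_smul {W : Lp ℝ 2 m} (hW : ∀ᵐ x ∂m, 0 < W x) :
    Dense {u : Lp ℝ 2 m | ∃ C > (0 : ℝ), |u| ≤ C • W} := by
  intro v
  set u : ℕ → Lp ℝ 2 m := fun n => (v ⊓ ((n + 1 : ℝ) • W)) ⊔ -((n + 1 : ℝ) • W)
  have hu : ∀ n, ∀ᵐ x ∂m, u n x = max (min (v x) ((n + 1) * W x)) (-((n + 1) * W x)) :=
    fun n => by
      filter_upwards [Lp.coeFn_sup (v ⊓ ((n + 1 : ℝ) • W)) (-((n + 1 : ℝ) • W)),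
        Lp.coeFn_inf v ((n + 1 : ℝ) • W), Lp.coeFn_neg ((n + 1 : ℝ) • W),
        Lp.coeFn_smul (n + 1 : ℝ) W] with x h1 h2 h3 h4
      simp only [u, h1, Pi.sup_apply, h2, Pi.inf_apply, h3, Pi.neg_apply, h4, Pi.smul_apply,
        smul_eq_mul]
  refine mem_closure_of_tendsto (f := u) (tendsto_of_ae_tendsto_of_abs_le ?_ fun n => ?_)
    (.of_forall fun n => (⟨(n + 1 : ℝ), by positivity, ?_⟩ : ∃ C > (0 : ℝ), |u n| ≤ C • W))
  · filter_upwards [ae_all_iff.2 hu, hW] with x hx hWx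
    obtain ⟨N, hN⟩ := exists_nat_ge (|v x| / W x)
    refine tendsto_atTop_of_eventually_const (i₀ := N) fun n hn => ?_
    have : |v x| ≤ (n + 1) * W x := by
      rw [div_le_iff₀ hWx] at hN
      nlinarith [(Nat.cast_le (α := ℝ)).2 hn]
    rw [hx n, min_eq_left ((le_abs_self _).trans this),
      max_eq_left (by linarith [neg_abs_le (v x)])]
  · filter_upwards [hu n, hW] with x hx hWx
    exact hx ▸ (abs_max_min_le (by positivity)).1
  · rw [← Lp.coeFn_le]
    filter_upwards [hu n, Lp.coeFn_abs (u n), Lp.coeFn_smul (n + 1 : ℝ) W, hW]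
      with x hx habs hsmul hWx
    rw [habs, hsmul, Pi.smul_apply, smul_eq_mul, hx]
    exact (abs_max_min_le (by positivity)).2

end MeasureTheory.L2

section PositivityPreserving

variable {X : Type*} [MeasurableSpace X] {m : Measure X}

def PositivityPreserving (S : Lp ℝ 2 m →L[ℝ] Lp ℝ 2 m) : Prop :=
  ∀ u, 0 ≤ u → 0 ≤ S u

variable {S : Lp ℝ 2 m →L[ℝ] Lp ℝ 2 m}

lemma PositivityPreserving.inner_apply_mono (hS : PositivityPreserving S)
    {u u' v v' : Lp ℝ 2 m} (hu : 0 ≤ u) (huu' : u ≤ u') (hv : 0 ≤ v) (hvv' : v ≤ v') :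
    ⟪u, S v⟫_ℝ ≤ ⟪u', S v'⟫_ℝ := by
  have h₁ := L2.inner_nonneg hu (hS _ (sub_nonneg.2 hvv'))
  have h₂ := L2.inner_nonneg (sub_nonneg.2 huu') (hS _ (hv.trans hvv'))
  rw [map_sub, inner_sub_right] at h₁
  rw [inner_sub_left] at h₂
  linarith

/-- Expanding `0 ≤ ⟪|u| - u, S (|u| + u)⟫`, the cross terms cancel by symmetry of `S`. -/
lemma PositivityPreserving.inner_apply_self_le_abs (hS : PositivityPreserving S)
    (hsymm : ∀ u v, ⟪S u, v⟫_ℝ = ⟪u, S v⟫_ℝ) (u : Lp ℝ 2 m) :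
    ⟪u, S u⟫_ℝ ≤ ⟪|u|, S |u|⟫_ℝ := by
  have h := L2.inner_nonneg (sub_nonneg.2 (le_abs_self u))
    (hS _ (by simpa [← sub_eq_add_neg] using sub_nonneg.2 (neg_le_abs u)))
  have hcross : ⟪u, S |u|⟫_ℝ = ⟪|u|, S u⟫_ℝ := by rw [← hsymm, real_inner_comm]
  rw [map_add, inner_sub_left, inner_add_right, inner_add_right, hcross] at h
  linarith

end PositivityPreserving

namespace IsHeatSemigroupOf

variable {X : Type*} [MeasurableSpace X] {m : Measure X} {T : ℝ → Lp ℝ 2 m →L[ℝ] Lp ℝ 2 m}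
  {ρ : Lp ℝ 2 m → Measure ℝ} {E0 : ℝ}

lemma positivityPreserving (hT : IsHeatSemigroupOf T ρ E0)
    (hpi : ∀ t : ℝ, 0 < t → ∀ f : Lp ℝ 2 m, 0 ≤ f → f ≠ 0 → ∀ᵐ x ∂m, 0 < (T t f) x)
    {t : ℝ} (ht : 0 ≤ t) : PositivityPreserving (T t) := by
  intro u hu
  rcases ht.eq_or_lt with rfl | ht
  · simpa [hT.map_zero] using hu
  rcases eq_or_ne u 0 with rfl | hu0
  · simp
  exact (Lp.coeFn_nonneg _).1 ((hpi t ht u hu hu0).mono fun x hx => hx.le)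

lemma exists_mul_exp_le_inner_apply_self (hT : IsHeatSemigroupOf T ρ E0)
    (hpos : ∀ t, 0 ≤ t → PositivityPreserving (T t)) {W : Lp ℝ 2 m}
    (hW : ∀ᵐ x ∂m, 0 < W x) {E1 : ℝ} (hE1 : E0 < E1) :
    ∃ c > 0, ∀ t, 0 ≤ t → c * Real.exp (-(t * E1)) ≤ ⟪W, T t W⟫_ℝ := by
  obtain ⟨u, ⟨C, hC, hu⟩, hmass⟩ : ∃ u ∈ {u : Lp ℝ 2 m | ∃ C > (0 : ℝ), |u| ≤ C • W},
      ρ u (Set.Iio E1) ≠ 0 := by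
    by_contra! h
    exact hE1.not_ge (hT.le_of_dense_of_measure_Iio_eq_zero (L2.dense_setOf_abs_le_smul hW) h)
  have := hT.isFiniteMeasure u
  refine ⟨(ρ u).real (Set.Iio E1) / C ^ 2,
    div_pos (ENNReal.toReal_pos hmass (measure_ne_top _ _)) (by positivity), fun t ht => ?_⟩
  calc (ρ u).real (Set.Iio E1) / C ^ 2 * Real.exp (-(t * E1))
      = Real.exp (-(t * E1)) * (ρ u).real (Set.Iio E1) / C ^ 2 := by ring
    _ ≤ ⟪u, T t u⟫_ℝ / C ^ 2 := by gcongr; exact hT.exp_mul_measureReal_Iio_le_inner u E1 ht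
    _ ≤ ⟪|u|, T t |u|⟫_ℝ / C ^ 2 := by
        gcongr; exact (hpos t ht).inner_apply_self_le_abs (hT.symm t ht) u
    _ ≤ ⟪C • W, T t (C • W)⟫_ℝ / C ^ 2 := by
        gcongr; exact (hpos t ht).inner_apply_mono (abs_nonneg u) hu (abs_nonneg u) hu
    _ = ⟪W, T t W⟫_ℝ := by
        rw [map_smul, real_inner_smul_left, real_inner_smul_right]
        field_simp

end IsHeatSemigroupOf

lemma log_div_le_of_le_mul_exp {y c t E : ℝ} (hy : 0 < y) (ht : 0 < t)
    (h : y ≤ c * Real.exp (-(t * E))) : Real.log y / t ≤ Real.log c / t - E := by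
  have hc : 0 < c := pos_of_mul_pos_left (hy.trans_le h) (Real.exp_nonneg _)
  have := Real.log_le_log hy h
  rw [Real.log_mul hc.ne' (Real.exp_ne_zero _), Real.log_exp] at this
  rw [div_sub' ht.ne', div_le_div_iff_of_pos_right ht]
  linarith

lemma le_log_div_of_mul_exp_le {y c t E : ℝ} (hc : 0 < c) (ht : 0 < t)
    (h : c * Real.exp (-(t * E)) ≤ y) : Real.log c / t - E ≤ Real.log y / t := by
  have := Real.log_le_log (by positivity) h
  rw [Real.log_mul hc.ne' (Real.exp_ne_zero _), Real.log_exp] at this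
  rw [div_sub' ht.ne', div_le_div_iff_of_pos_right ht]
  linarith

lemma tendsto_log_div_of_exp_bounds {φ : ℝ → ℝ} {E C : ℝ}
    (upper : ∀ᶠ t in atTop, φ t ≤ C * Real.exp (-(t * E)))
    (lower : ∀ ε > 0, ∃ c > 0, ∀ᶠ t in atTop, c * Real.exp (-(t * (E + ε))) ≤ φ t) :
    Tendsto (fun t => Real.log (φ t) / t) atTop (𝓝 (-E)) := by
  have hlim (c E' : ℝ) : Tendsto (fun t => Real.log c / t - E') atTop (𝓝 (-E')) := by
    simpa using (tendsto_const_nhds.div_atTop tendsto_id).sub_const E'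
  refine tendsto_order.2 ⟨fun a ha => ?_, fun b hb => ?_⟩
  · obtain ⟨c, hc, hlow⟩ := lower ((-E - a) / 2) (by linarith)
    filter_upwards [hlow, (hlim c _).eventually
      (eventually_gt_nhds (show a < -(E + (-E - a) / 2) by linarith)),
      eventually_gt_atTop 0] with t hφ ha ht
    exact ha.trans_le (le_log_div_of_mul_exp_le hc ht hφ)
  · obtain ⟨c, hc, hlow⟩ := lower 1 one_pos
    filter_upwards [upper, hlow, (hlim C E).eventually (eventually_lt_nhds hb),
      eventually_gt_atTop 0] with t hφ hφ₀ hb ht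
    exact (log_div_le_of_le_mul_exp ((by positivity : (0 : ℝ) < _).trans_le hφ₀) ht hφ).trans_lt hb

theorem statement5_general {X : Type*} [MeasurableSpace X] (m : Measure X)
    (T : ℝ → Lp ℝ 2 m →L[ℝ] Lp ℝ 2 m) (ρ : Lp ℝ 2 m → Measure ℝ) (E0 : ℝ)
    (hT : IsHeatSemigroupOf T ρ E0)
    (hpi : ∀ t : ℝ, 0 < t → ∀ f : Lp ℝ 2 m, 0 ≤ f → f ≠ 0 → ∀ᵐ x ∂m, 0 < (T t f) x)
    (f g : Lp ℝ 2 m)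
    (hf : 0 ≤ f) (hf' : f ≠ 0) (hg : 0 ≤ g) (hg' : g ≠ 0) :
    Tendsto (fun t : ℝ => Real.log ⟪f, T t g⟫_ℝ / t) atTop (𝓝 (-E0)) := by
  have hpos (t : ℝ) (ht : 0 ≤ t) := hT.positivityPreserving hpi ht
  set W := T 1 f ⊓ T 1 g
  have hW : ∀ᵐ x ∂m, 0 < W x := by
    filter_upwards [hpi 1 one_pos f hf hf', hpi 1 one_pos g hg hg',
      Lp.coeFn_inf (T 1 f) (T 1 g)] with x hfx hgx hx
    simpa [W, hx] using ⟨hfx, hgx⟩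
  have hW₀ : 0 ≤ W := le_inf (hpos 1 zero_le_one f hf) (hpos 1 zero_le_one g hg)
  have hcompare (t : ℝ) (ht : 0 ≤ t) : ⟪W, T t W⟫_ℝ ≤ ⟪f, T (t + 2) g⟫_ℝ :=
    calc ⟪W, T t W⟫_ℝ ≤ ⟪T 1 f, T t (T 1 g)⟫_ℝ :=
          (hpos t ht).inner_apply_mono hW₀ inf_le_left hW₀ inf_le_right
      _ = ⟪f, T (t + 2) g⟫_ℝ := by
          rw [← ContinuousLinearMap.comp_apply, ← hT.semigroup t 1 ht zero_le_one,
            hT.inner_apply_apply zero_le_one (by linarith)]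
          ring_nf
  refine tendsto_log_div_of_exp_bounds (C := ‖f‖ * ‖g‖)
    ((eventually_ge_atTop 0).mono fun t ht => hT.inner_apply_le ht f g) fun ε hε => ?_
  obtain ⟨c, hc, hbound⟩ :=
    hT.exists_mul_exp_le_inner_apply_self hpos hW (lt_add_of_pos_right E0 hε)
  refine ⟨c * Real.exp (2 * (E0 + ε)), by positivity, (eventually_ge_atTop 2).mono fun t ht => ?_⟩
  calc c * Real.exp (2 * (E0 + ε)) * Real.exp (-(t * (E0 + ε)))
      = c * Real.exp (-((t - 2) * (E0 + ε))) := by rw [mul_assoc, ← Real.exp_add]; ring_nf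
    _ ≤ ⟪W, T (t - 2) W⟫_ℝ := hbound _ (by linarith)
    _ ≤ ⟪f, T t g⟫_ℝ := by simpa using hcompare (t - 2) (by linarith)

/-- Let `L` be a selfadjoint operator in `L²(X, m)` (with `(X, m)` σ-finite),
bounded below, with `E0` the infimum of the spectrum of `L`, and assume that the semigroup
`(e^{-tL})_{t≥0}` is positivity improving (i.e., `e^{-tL} f` is strictly positive for every
positive `f` and every `t > 0`). Then `lim_{t→∞} (log ⟪f, e^{-tL} g⟫)/t = -E0` for all
positive `f` and `g` in `L²(X, m)`. Here `f` is positive if `⟪f, f⟫ > 0` and `f ≥ 0` a.e.,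
equivalently `0 ≤ f` and `f ≠ 0` in `L²(X, m)`. -/
theorem statement5 {X : Type*} [MeasurableSpace X] (m : Measure X) [SigmaFinite m]
    (T : ℝ → Lp ℝ 2 m →L[ℝ] Lp ℝ 2 m) (ρ : Lp ℝ 2 m → Measure ℝ) (E0 : ℝ)
    (hT : IsHeatSemigroupOf T ρ E0)
    (hpi : ∀ t : ℝ, 0 < t → ∀ f : Lp ℝ 2 m, 0 ≤ f → f ≠ 0 → ∀ᵐ x ∂m, 0 < (T t f) x)
    (f g : Lp ℝ 2 m)
    (hf : 0 ≤ f) (hf' : f ≠ 0) (hg : 0 ≤ g) (hg' : g ≠ 0) :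
    Tendsto (fun t : ℝ => Real.log ⟪f, T t g⟫_ℝ / t) atTop (𝓝 (-E0)) :=
  statement5_general m T ρ E0 hT hpi f g hf hf' hg hg'
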